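/- arXiv:1505.06580 — 7 statements merged into one kernel-verified Lean document; each statement's English description precedes it below -/
import Mathlib

section
/- The submonoid H(a,b,c) of (ℕ,+) generated by the set S(a,b,c) = { t_k(a,b,c) : k ∈ ℕ } is closed with respect to the map θ_{a,b}(x) = ax + b, i.e., if y ∈ H(a,b,c) with y ≠ 0, then ay + b ∈ H(a,b,c). -/
/-- `sF a k = Σ_{i=0}^{k-1} a^i` (so `sF a 0 = 0`). -/
def sF (a k : ℕ) : ℕ := ∑ i ∈ Finset.range k, a ^ i

/-- `tF a b c k = a^k * c + b * sF a k`. -/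
def tF (a b c k : ℕ) : ℕ := a ^ k * c + b * sF a k

/-- A θ_{a,b}-semigroup: contains 0, closed under addition, and closed under
`x ↦ a*x + b` on nonzero elements. -/
def IsThetaSG (a b : ℕ) (S : Set ℕ) : Prop :=
  0 ∈ S ∧ (∀ x ∈ S, ∀ y ∈ S, x + y ∈ S) ∧ ∀ y ∈ S, y ≠ 0 → a * y + b ∈ S

/-- `Gset a b c` : the smallest θ_{a,b}-semigroup containing `c`. -/
def Gset (a b c : ℕ) : Set ℕ := ⋂₀ {S : Set ℕ | IsThetaSG a b S ∧ c ∈ S}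

/-- `Hmon a b c` : additive submonoid generated by the `tF a b c k`. -/
def Hmon (a b c : ℕ) : AddSubmonoid ℕ :=
  AddSubmonoid.closure {x | ∃ k, x = tF a b c k}

/-- `{j_i}_{i=1}^k` is `a`-reduced. -/
def AReduced (a k : ℕ) (j : ℕ → ℕ) : Prop :=
  (∀ i, 1 ≤ i → i ≤ k → j i ≤ a) ∧ j k ≠ 0 ∧
  ∀ m, 1 ≤ m → m ≤ k → j m = a → ∀ i, 1 ≤ i → i < m → j i = 0

theorem stmt2 (a b c : ℕ) (ha : 0 < a) (hb : 0 < b) (hc : 2 ≤ c)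
    (y : ℕ) (hy : y ∈ Hmon a b c) (h0 : y ≠ 0) :
    a * y + b ∈ Hmon a b c := by
  have key : ∀ k, tF a b c (k + 1) = a * tF a b c k + b := by
    intro k
    simp only [tF, sF, geom_sum_succ, pow_succ]
    ring
  have hdec : y = 0 ∨ ∃ k, ∃ z ∈ Hmon a b c, y = tF a b c k + z := by
    refine AddSubmonoid.closure_induction (fun x hx => ?_) (Or.inl rfl)
      (fun x z hx hz ihx ihz => ?_) hy
    · obtain ⟨k, rfl⟩ := hx
      exact Or.inr ⟨k, 0, (Hmon a b c).zero_mem, (add_zero _).symm⟩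
    · rcases ihx with rfl | ⟨k, w, hw, rfl⟩
      · simpa using ihz
      · exact Or.inr ⟨k, w + z, (Hmon a b c).add_mem hw hz, add_assoc _ _ _⟩
  rcases hdec with rfl | ⟨k, z, hz, rfl⟩
  · exact absurd rfl h0
  · have h1 : tF a b c (k + 1) ∈ Hmon a b c :=
      AddSubmonoid.subset_closure ⟨k + 1, rfl⟩
    have h2 : a * z ∈ Hmon a b c := by
      simpa [nsmul_eq_mul] using (Hmon a b c).nsmul_mem hz a
    have : a * (tF a b c k + z) + b = tF a b c (k + 1) + a * z := by
      rw [key]; ring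
    rw [this]
    exact (Hmon a b c).add_mem h1 h2
end

section
/- For every k ∈ ℕ and every i with 0 ≤ i ≤ s_k(a), the integer a^k·c + b·i belongs to H(a,b,c). -/
theorem stmt3 (a b c : ℕ) (ha : 0 < a) (hb : 0 < b) (hc : 2 ≤ c)
    (k i : ℕ) (hi : i ≤ sF a k) :
    a ^ k * c + b * i ∈ Hmon a b c := by
  induction k generalizing i with
  | zero =>
    simp only [sF, Finset.range_zero, Finset.sum_empty, Nat.le_zero] at hi
    subst hi
    have hmem : c ∈ Hmon a b c := AddSubmonoid.subset_closure ⟨0, by simp [tF, sF]⟩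
    simpa using hmem
  | succ k ih =>
    have hsucc : sF a (k + 1) = a * sF a k + 1 := by
      simp [sF, Finset.mul_sum, ← pow_succ']
      rw [Finset.sum_range_succ']
      simp [add_comm]
    -- auxiliary: for all n, i ≤ n * sF a k → n * (a^k*c) + b*i ∈ Hmon
    have aux : ∀ n j, j ≤ n * sF a k → n * (a ^ k * c) + b * j ∈ Hmon a b c := by
      intro n
      induction n with
      | zero => intro j hj; simp at hj; simpa [hj] using (Hmon a b c).zero_mem
      | succ n ihn =>
        intro j hj
        set m := min j (sF a k) with hm
        have h1 : m ≤ sF a k := min_le_right _ _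
        have hexp : (n + 1) * sF a k = n * sF a k + sF a k := by ring
        have h2 : j - m ≤ n * sF a k := by
          rcases le_or_gt j (sF a k) with h | h
          · simp [hm, min_eq_left h]
          · have : m = sF a k := min_eq_right h.le
            omega
        have hmem := (Hmon a b c).add_mem (ih m h1) (ihn (j - m) h2)
        have hjm : m + (j - m) = j := Nat.add_sub_cancel' (min_le_left _ _)
        have heq : a ^ k * c + b * m + (n * (a ^ k * c) + b * (j - m)) =
            (n + 1) * (a ^ k * c) + b * j := by
          conv_rhs => rw [← hjm]
          ring
        rwa [heq] at hmem
    rcases Nat.lt_or_ge i (sF a (k + 1)) with h | h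
    · have hle : i ≤ a * sF a k := by omega
      have := aux a i hle
      have heq : a * (a ^ k * c) = a ^ (k + 1) * c := by ring
      rwa [heq] at this
    · have : i = sF a (k + 1) := le_antisymm hi h
      subst this
      exact AddSubmonoid.subset_closure ⟨k + 1, rfl⟩
end

section
/- If k is a non-negative integer with s_k(a) ≥ c - 1 and gcd(b,c) = 1, then every integer y ≥ t_k(a,b,c) belongs to H(a,b,c). -/
lemma t_mem (a b c k : ℕ) : tF a b c k ∈ Hmon a b c :=
  AddSubmonoid.subset_closure ⟨k, rfl⟩

lemma sF_succ (a k : ℕ) : sF a (k+1) = a * sF a k + 1 := by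
  simp [sF, Finset.sum_range_succ', Finset.mul_sum, pow_succ, mul_comm]

lemma key (a b c : ℕ) :
    ∀ k, ∀ n ≤ sF a k, ∃ p ≤ a ^ k, c * p + b * n ∈ Hmon a b c := by
  intro k
  induction k with
  | zero =>
    intro n hn
    simp [sF] at hn
    exact ⟨0, by simp, by simp [hn]⟩
  | succ k ih =>
    intro n hn
    rw [sF_succ] at hn
    by_cases h1 : n = a * sF a k + 1
    · refine ⟨a ^ (k+1), le_rfl, ?_⟩
      have : c * a ^ (k+1) + b * n = tF a b c (k+1) := by
        rw [tF, sF_succ, h1]; ring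
      rw [this]; exact t_mem a b c (k+1)
    · have hn' : n ≤ a * sF a k := by omega
      by_cases h0 : sF a k = 0
      · have hn0 : n = 0 := by simp [h0] at hn'; omega
        exact ⟨0, by simp, by simp [hn0]⟩
      · have hspos : 0 < sF a k := Nat.pos_of_ne_zero h0
        by_cases hj : a ≤ n / sF a k
        · have hge : a * sF a k ≤ n :=
            le_trans (Nat.mul_le_mul_right (sF a k) hj) (Nat.div_mul_le_self n (sF a k))
          have hn2 : n = a * sF a k := le_antisymm hn' hge
          refine ⟨a ^ (k+1), le_rfl, ?_⟩
          have he : c * a ^ (k+1) + b * n = a • tF a b c k := by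
            rw [hn2, tF, smul_eq_mul]; ring
          rw [he]
          exact (Hmon a b c).nsmul_mem (t_mem a b c k) a
        · push_neg at hj
          obtain ⟨p, hp, hmem⟩ := ih (n % sF a k) (le_of_lt (Nat.mod_lt n hspos))
          refine ⟨(n / sF a k) * a ^ k + p, ?_, ?_⟩
          · calc (n / sF a k) * a ^ k + p ≤ (n / sF a k) * a ^ k + a ^ k :=
                  Nat.add_le_add_left hp _
              _ = (n / sF a k + 1) * a ^ k := by ring
              _ ≤ a * a ^ k := Nat.mul_le_mul hj le_rfl
              _ = a ^ (k+1) := by rw [pow_succ, mul_comm]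
          · have he : c * ((n / sF a k) * a ^ k + p) + b * n
                = (n / sF a k) • tF a b c k + (c * p + b * (n % sF a k)) := by
              rw [tF, smul_eq_mul]
              nlinarith [Nat.div_add_mod n (sF a k)]
            rw [he]
            exact (Hmon a b c).add_mem ((Hmon a b c).nsmul_mem (t_mem a b c k) _) hmem

theorem stmt4 (a b c : ℕ) (ha : 0 < a) (hb : 0 < b) (hc : 2 ≤ c)
    (hcop : Nat.gcd b c = 1) (k : ℕ) (hk : c - 1 ≤ sF a k)
    (y : ℕ) (hy : tF a b c k ≤ y) :
    y ∈ Hmon a b c := by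
  haveI : NeZero c := ⟨by omega⟩
  set bu : (ZMod c)ˣ := ZMod.unitOfCoprime b hcop with hbu
  set d : ℕ := (((bu⁻¹ : (ZMod c)ˣ) : ZMod c) *
      ((b : ZMod c) * (sF a k : ZMod c) - (y : ZMod c))).val with hd
  have hdlt : d < c := ZMod.val_lt _
  have hds : d ≤ sF a k := by omega
  have hbd : (b : ZMod c) * (d : ZMod c)
      = (b : ZMod c) * (sF a k : ZMod c) - (y : ZMod c) := by
    rw [hd, ZMod.natCast_val, ZMod.cast_id, ← mul_assoc]
    have hbuc : ((bu : (ZMod c)ˣ) : ZMod c) = (b : ZMod c) := ZMod.coe_unitOfCoprime b hcop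
    rw [← hbuc, Units.mul_inv, one_mul]
  obtain ⟨p, hp, hmem⟩ := key a b c k (sF a k - d) (Nat.sub_le _ _)
  have hcast : ((c * p + b * (sF a k - d) : ℕ) : ZMod c) = (y : ZMod c) := by
    push_cast [Nat.cast_sub hds]
    rw [ZMod.natCast_self]
    rw [mul_sub, hbd]
    ring
  have hle : c * p + b * (sF a k - d) ≤ y := by
    have h1 : c * p ≤ c * a ^ k := Nat.mul_le_mul_left c hp
    have h2 : b * (sF a k - d) ≤ b * sF a k := Nat.mul_le_mul_left b (Nat.sub_le _ _)
    have h3 : c * a ^ k + b * sF a k = tF a b c k := by rw [tF]; ring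
    omega
  have hdvd : c ∣ y - (c * p + b * (sF a k - d)) := by
    rw [← Nat.modEq_iff_dvd' hle]
    exact (ZMod.natCast_eq_natCast_iff _ _ _).mp hcast
  obtain ⟨m, hm⟩ := hdvd
  have hy2 : y = (c * p + b * (sF a k - d)) + m • c := by
    rw [smul_eq_mul, mul_comm m c]; omega
  rw [hy2]
  refine (Hmon a b c).add_mem hmem ((Hmon a b c).nsmul_mem ?_ m)
  have hc0 := t_mem a b c 0
  rwa [show tF a b c 0 = c from by simp [tF, sF]] at hc0
end

section
/- If gcd(b,c)=1, then the complement ℕ \ H(a,b,c) is finite, so H(a,b,c) is a numerical semigroup. -/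
theorem stmt5 (a b c : ℕ) (ha : 0 < a) (hb : 0 < b) (hc : 2 ≤ c)
    (hcop : Nat.gcd b c = 1) :
    {n : ℕ | n ∉ Hmon a b c}.Finite := by
  set d := a * c + b with hd
  have hcH : c ∈ Hmon a b c := AddSubmonoid.subset_closure ⟨0, by simp [tF, sF]⟩
  have hdH : d ∈ Hmon a b c := AddSubmonoid.subset_closure ⟨1, by simp [tF, sF, hd]⟩
  have hcop' : Nat.Coprime d c := by
    have : Nat.Coprime b c := hcop
    have := (Nat.coprime_add_mul_right_left b c a).mpr this
    simpa [hd, Nat.add_comm] using this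
  haveI : NeZero c := ⟨by omega⟩
  haveI : Fact (1 < c) := ⟨by omega⟩
  apply Set.Finite.subset (Set.finite_Iio (c * d))
  intro n hn
  simp only [Set.mem_setOf_eq] at hn
  by_contra hlt
  apply hn
  have hge : c * d ≤ n := by simpa using hlt
  -- choose y < c with y * d ≡ n mod c
  have hunit : IsUnit (d : ZMod c) := by
    rw [ZMod.isUnit_iff_coprime]; exact hcop'
  set y := ((n : ZMod c) * (d : ZMod c)⁻¹).val with hy
  have hylt : y < c := ZMod.val_lt _
  have hcast : ((y * d : ℕ) : ZMod c) = (n : ZMod c) := by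
    push_cast [hy]
    rw [ZMod.natCast_val, ZMod.cast_id, mul_assoc, ZMod.inv_mul_of_unit _ hunit, mul_one]
  have hyd : y * d ≤ n := by
    have h1 : y * d ≤ (c - 1) * d := Nat.mul_le_mul_right _ (by omega)
    have hdpos : 0 < d := by positivity
    have h2 : (c - 1) * d < c * d := (Nat.mul_lt_mul_right hdpos).mpr (by omega)
    omega
  have hdvd : c ∣ n - y * d := by
    have := (ZMod.natCast_eq_natCast_iff _ _ _).mp hcast
    exact (Nat.modEq_iff_dvd' hyd).mp this
  obtain ⟨x, hx⟩ := hdvd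
  have hn' : n = c * x + y * d := by omega
  rw [hn']
  exact (Hmon a b c).add_mem
    (by simpa [nsmul_eq_mul, Nat.mul_comm] using (Hmon a b c).nsmul_mem hcH x)
    (by simpa [nsmul_eq_mul] using (Hmon a b c).nsmul_mem hdH y)
end

section
/- G_{a,b}(c) = H(a,b,c); that is, the smallest numerical semigroup containing c and closed under x ↦ ax+b on nonzero elements equals the additive submonoid generated by { a^k·c + b·s_k(a) : k ∈ ℕ }. -/
/-!
Since `t_{k+1} = θ(t_k)` and all `t_k` are nonzero, every θ-semigroup containing `c` contains
every `t_k`, hence `H(a,b,c)`; in particular `G_{a,b}(c) ⊇ H(a,b,c)`. Conversely `H(a,b,c)` is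
itself a θ-semigroup containing `c = t_0`: from `θ(x + y) = θ(x) + a y`, closure under `θ`
passes from the generators to all their sums.
-/

variable {a b c : ℕ}

@[simp]
lemma tF_zero : tF a b c 0 = c := by
  simp [tF, sF]

lemma tF_succ (k : ℕ) : tF a b c (k + 1) = a * tF a b c k + b := by
  have hs : sF a (k + 1) = a * sF a k + 1 := geom_sum_succ
  rw [tF, tF, hs]
  ring

lemma tF_pos (ha : 0 < a) (hc : 0 < c) (k : ℕ) : 0 < tF a b c k :=
  Nat.add_pos_left (Nat.mul_pos (pow_pos ha k) hc) _

namespace IsThetaSG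

variable {S : Set ℕ}

def toAddSubmonoid (hS : IsThetaSG a b S) : AddSubmonoid ℕ where
  carrier := S
  add_mem' {x y} hx hy := hS.2.1 x hx y hy
  zero_mem' := hS.1

lemma tF_mem (hS : IsThetaSG a b S) (hcS : c ∈ S) (ha : 0 < a) (hc : 0 < c) (k : ℕ) :
    tF a b c k ∈ S := by
  induction k with
  | zero => simpa using hcS
  | succ k ih => simpa [tF_succ] using hS.2.2 _ ih (tF_pos ha hc k).ne'

lemma hmon_subset (hS : IsThetaSG a b S) (hcS : c ∈ S) (ha : 0 < a) (hc : 0 < c) :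
    (Hmon a b c : Set ℕ) ⊆ S :=
  AddSubmonoid.closure_le (S := hS.toAddSubmonoid).mpr <| by
    rintro _ ⟨k, rfl⟩
    exact hS.tF_mem hcS ha hc k

end IsThetaSG

lemma gset_subset {S : Set ℕ} (hS : IsThetaSG a b S) (hcS : c ∈ S) : Gset a b c ⊆ S :=
  Set.sInter_subset_of_mem ⟨hS, hcS⟩

lemma mem_gset_self : c ∈ Gset a b c :=
  Set.mem_sInter.mpr fun _ hS => hS.2

lemma isThetaSG_gset : IsThetaSG a b (Gset a b c) := by
  refine ⟨Set.mem_sInter.mpr fun S hS => hS.1.1, ?_, ?_⟩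
  · intro x hx y hy
    exact Set.mem_sInter.mpr fun S hS =>
      hS.1.2.1 x (Set.mem_sInter.mp hx S hS) y (Set.mem_sInter.mp hy S hS)
  · intro y hy hy0
    exact Set.mem_sInter.mpr fun S hS => hS.1.2.2 y (Set.mem_sInter.mp hy S hS) hy0

lemma tF_mem_hmon (k : ℕ) : tF a b c k ∈ Hmon a b c :=
  AddSubmonoid.subset_closure ⟨k, rfl⟩

lemma mul_add_mem_hmon {y : ℕ} (hy : y ∈ Hmon a b c) (hy0 : y ≠ 0) :
    a * y + b ∈ Hmon a b c := by
  suffices y = 0 ∨ a * y + b ∈ Hmon a b c from this.resolve_left hy0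
  clear hy0
  induction hy using AddSubmonoid.closure_induction with
  | mem x hx =>
    obtain ⟨k, rfl⟩ := hx
    exact Or.inr (tF_succ k ▸ tF_mem_hmon (k + 1))
  | zero => exact Or.inl rfl
  | add x y hx hy ihx ihy =>
    rcases ihx with rfl | hθx
    · simpa using ihy
    · have hay : a * y ∈ Hmon a b c := by
        simpa using (Hmon a b c).nsmul_mem hy a
      right
      rw [show a * (x + y) + b = (a * x + b) + a * y by ring]
      exact add_mem hθx hay

lemma isThetaSG_hmon : IsThetaSG a b (Hmon a b c) :=
  ⟨zero_mem _, fun _ hx _ hy => add_mem hx hy, fun _ hy hy0 => mul_add_mem_hmon hy hy0⟩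

theorem stmt6_general (a b c : ℕ) (ha : 0 < a) (hc : 2 ≤ c) :
    Gset a b c = (Hmon a b c : Set ℕ) := by
  have hcH : c ∈ Hmon a b c := by simpa using tF_mem_hmon (a := a) (b := b) (c := c) 0
  exact (gset_subset isThetaSG_hmon hcH).antisymm
    (isThetaSG_gset.hmon_subset mem_gset_self ha (by omega))

theorem stmt6 (a b c : ℕ) (ha : 0 < a) (hb : 0 < b) (hc : 2 ≤ c)
    (hcop : Nat.gcd b c = 1) :
    Gset a b c = (Hmon a b c : Set ℕ) :=
  stmt6_general a b c ha hc
end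

section
/- Let k ≥ 1 and let x be a positive integer with s_k(a) ≤ x < s_{k+1}(a). Then there exists a unique a-reduced set of integers { j_i }_{i=1}^{k} such that x = Σ_{i=1}^{k} j_i · s_i(a). -/
lemma sF_one (a : ℕ) : sF a 1 = 1 := by simp [sF]

lemma sF_mono (a : ℕ) {k m : ℕ} (h : k ≤ m) : sF a k ≤ sF a m :=
  Finset.sum_le_sum_of_subset (Finset.range_subset_range.2 h)

lemma sF_pos (a : ℕ) (ha : 0 < a) {k : ℕ} (hk : 1 ≤ k) : 0 < sF a k := by
  have h := sF_mono a hk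
  rw [sF_one] at h
  omega

lemma sum_bound (a : ℕ) (ha : 0 < a) :
    ∀ (k : ℕ) (j : ℕ → ℕ), (∀ i, 1 ≤ i → i ≤ k → j i ≤ a) →
      (∀ m, 1 ≤ m → m ≤ k → j m = a → ∀ i, 1 ≤ i → i < m → j i = 0) →
      ∑ i ∈ Finset.Icc 1 k, j i * sF a i < sF a (k+1) := by
  intro k
  induction k with
  | zero => intro j _ _; simp [sF_one]
  | succ k ih =>
    intro j hle hred
    rw [Finset.sum_Icc_succ_top (by omega : 1 ≤ k + 1)]
    rcases (hle (k+1) (by omega) le_rfl).lt_or_eq with hja | hja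
    · have h1 := ih j (fun i a b => hle i a (by omega))
        (fun m a b c => hred m a (by omega) c)
      have h2 : sF a (k+2) = a * sF a (k+1) + 1 := sF_succ a (k+1)
      have h3 : 0 < sF a (k+1) := sF_pos a ha (by omega)
      nlinarith [Nat.mul_le_mul_right (sF a (k+1)) (show j (k+1) + 1 ≤ a from hja)]
    · have hz : ∑ i ∈ Finset.Icc 1 k, j i * sF a i = 0 := by
        apply Finset.sum_eq_zero
        intro i hi
        simp only [Finset.mem_Icc] at hi
        rw [hred (k+1) (by omega) le_rfl hja i hi.1 (by omega), zero_mul]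
      rw [hz, zero_add, hja, sF_succ a (k+1)]
      omega

lemma agree (a : ℕ) (ha : 0 < a) :
    ∀ (k : ℕ) (j j' : ℕ → ℕ),
      (∀ i, 1 ≤ i → i ≤ k → j i ≤ a) →
      (∀ m, 1 ≤ m → m ≤ k → j m = a → ∀ i, 1 ≤ i → i < m → j i = 0) →
      (∀ i, 1 ≤ i → i ≤ k → j' i ≤ a) →
      (∀ m, 1 ≤ m → m ≤ k → j' m = a → ∀ i, 1 ≤ i → i < m → j' i = 0) →
      ∑ i ∈ Finset.Icc 1 k, j i * sF a i = ∑ i ∈ Finset.Icc 1 k, j' i * sF a i →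
      ∀ i, 1 ≤ i → i ≤ k → j i = j' i := by
  intro k
  induction k with
  | zero => intro _ _ _ _ _ _ _ i h1 h2; omega
  | succ k ih =>
    intro j j' hle hred hle' hred' hsum i hi1 hi2
    have ht : ∑ i ∈ Finset.Icc 1 k, j i * sF a i < sF a (k+1) :=
      sum_bound a ha k j (fun i a b => hle i a (by omega)) (fun m a b c => hred m a (by omega) c)
    have ht' : ∑ i ∈ Finset.Icc 1 k, j' i * sF a i < sF a (k+1) :=
      sum_bound a ha k j' (fun i a b => hle' i a (by omega)) (fun m a b c => hred' m a (by omega) c)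
    rw [Finset.sum_Icc_succ_top (by omega : 1 ≤ k + 1),
        Finset.sum_Icc_succ_top (by omega : 1 ≤ k + 1)] at hsum
    have hs : 0 < sF a (k+1) := sF_pos a ha (by omega)
    have hdiv : ∀ (t c : ℕ), t < sF a (k+1) → (t + c * sF a (k+1)) / sF a (k+1) = c := by
      intro t c h
      rw [Nat.add_mul_div_right _ _ hs, Nat.div_eq_of_lt h, zero_add]
    have hj : j (k+1) = j' (k+1) := by
      have h1 := hdiv _ (j (k+1)) ht
      have h2 := hdiv _ (j' (k+1)) ht'
      rw [← h1, ← h2, hsum]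
    have htt : ∑ i ∈ Finset.Icc 1 k, j i * sF a i = ∑ i ∈ Finset.Icc 1 k, j' i * sF a i := by
      rw [hj] at hsum; omega
    rcases Nat.lt_or_ge i (k+1) with h | h
    · exact ih j j' (fun i a b => hle i a (by omega)) (fun m a b c => hred m a (by omega) c)
        (fun i a b => hle' i a (by omega)) (fun m a b c => hred' m a (by omega) c) htt i hi1 (by omega)
    · have : i = k+1 := by omega
      rw [this]; exact hj

lemma exists_level (a : ℕ) (ha : 0 < a) :
    ∀ k r, 1 ≤ r → r < sF a k → ∃ m, 1 ≤ m ∧ m < k ∧ sF a m ≤ r ∧ r < sF a (m+1) := by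
  intro k
  induction k with
  | zero => intro r h1 h2; simp [sF] at h2
  | succ k ih =>
    intro r h1 h2
    by_cases h : r < sF a k
    · obtain ⟨m, hm⟩ := ih r h1 h
      exact ⟨m, hm.1, by omega, hm.2.2⟩
    · push_neg at h
      have hk1 : 1 ≤ k := by
        by_contra hh
        have hk0 : k = 0 := by omega
        subst hk0
        rw [sF_one] at h2
        omega
      exact ⟨k, hk1, by omega, h, h2⟩

lemma exists_rep (a : ℕ) (ha : 0 < a) :
    ∀ k, 1 ≤ k → ∀ x, sF a k ≤ x → x < sF a (k+1) →
      ∃ j : ℕ → ℕ, (∀ i, i = 0 ∨ k < i → j i = 0) ∧ AReduced a k j ∧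
        x = ∑ i ∈ Finset.Icc 1 k, j i * sF a i := by
  intro k
  induction k using Nat.strong_induction_on with
  | _ k ih =>
  intro hk x hx1 hx2
  have hs : 0 < sF a k := sF_pos a ha hk
  have hdm : sF a k * (x / sF a k) + x % sF a k = x := Nat.div_add_mod x (sF a k)
  set q := x / sF a k with hq
  set r := x % sF a k with hr
  have hq1 : 1 ≤ q := (Nat.one_le_div_iff hs).2 hx1
  have hxa : x ≤ a * sF a k := by have := sF_succ a k; omega
  have hqa : q ≤ a := by
    have h1 : q ≤ a * sF a k / sF a k := Nat.div_le_div_right hxa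
    rwa [Nat.mul_div_cancel a hs] at h1
  rcases Nat.eq_zero_or_pos r with hr0 | hrpos
  · refine ⟨fun i => if i = k then q else 0, ?_, ⟨?_, ?_, ?_⟩, ?_⟩
    · intro i hi
      have : i ≠ k := by omega
      simp [this]
    · intro i h1 h2
      by_cases h : i = k
      · simpa [h] using hqa
      · simp [h]
    · simpa using by omega
    · intro m h1 h2 hm i hi1 hi2
      have : i ≠ k := by omega
      simp [this]
    · rw [Finset.sum_eq_single k]
      · have hc := Nat.mul_comm q (sF a k)
        simp
        omega
      · intro i hi hne; simp [hne]
      · intro h; exact absurd (Finset.mem_Icc.2 ⟨hk, le_rfl⟩) h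
  · have hrlt : r < sF a k := Nat.mod_lt _ hs
    have hqa' : q < a := by
      by_contra h
      push_neg at h
      have h2 : sF a k * a ≤ sF a k * q := Nat.mul_le_mul_left _ h
      have h3 := Nat.mul_comm a (sF a k)
      omega
    obtain ⟨m, hm1, hmk, hmr1, hmr2⟩ := exists_level a ha k r hrpos hrlt
    obtain ⟨j', hj'0, ⟨hj'le, hj'ne, hj'red⟩, hj'sum⟩ := ih m hmk hm1 r hmr1 hmr2
    refine ⟨fun i => if i = k then q else j' i, ?_, ⟨?_, ?_, ?_⟩, ?_⟩
    · intro i hi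
      have hne : i ≠ k := by omega
      simp only [hne, if_false]
      exact hj'0 i (by omega)
    · intro i h1 h2
      by_cases h : i = k
      · simpa [h] using hqa
      · simp only [h, if_false]
        by_cases h3 : i ≤ m
        · exact hj'le i h1 h3
        · rw [hj'0 i (by omega)]; omega
    · simpa using by omega
    · intro m' h1 h2 hm' i hi1 hi2
      by_cases h : m' = k
      · exfalso; rw [h] at hm'; simp at hm'; omega
      · simp only [h, if_false] at hm'
        have hm'm : m' ≤ m := by
          by_contra hh
          rw [hj'0 m' (by omega)] at hm'
          omega
        have hine : i ≠ k := by omega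
        simp only [hine, if_false]
        exact hj'red m' h1 hm'm hm' i hi1 hi2
    · obtain ⟨k', rfl⟩ : ∃ k', k = k' + 1 := ⟨k - 1, by omega⟩
      rw [Finset.sum_Icc_succ_top (by omega : 1 ≤ k' + 1)]
      beta_reduce
      rw [if_pos rfl]
      have hsum1 : ∑ i ∈ Finset.Icc 1 k', (if i = k' + 1 then q else j' i) * sF a i
          = ∑ i ∈ Finset.Icc 1 k', j' i * sF a i := by
        apply Finset.sum_congr rfl
        intro i hi
        simp only [Finset.mem_Icc] at hi
        have : i ≠ k' + 1 := by omega
        simp [this]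
      have hsum2 : ∑ i ∈ Finset.Icc 1 m, j' i * sF a i
          = ∑ i ∈ Finset.Icc 1 k', j' i * sF a i := by
        apply Finset.sum_subset
        · intro i hi
          simp only [Finset.mem_Icc] at hi ⊢
          omega
        · intro i hi hni
          simp only [Finset.mem_Icc] at hi hni
          rw [hj'0 i (by omega), zero_mul]
      rw [hsum1, ← hsum2, ← hj'sum]
      have hc := Nat.mul_comm q (sF a (k' + 1))
      omega
theorem stmt10 (a : ℕ) (ha : 0 < a) (k : ℕ) (hk : 1 ≤ k) (x : ℕ)
    (hx1 : sF a k ≤ x) (hx2 : x < sF a (k + 1)) :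
    ∃! j : ℕ → ℕ, (∀ i, (i = 0 ∨ k < i) → j i = 0) ∧ AReduced a k j ∧
      x = ∑ i ∈ Finset.Icc 1 k, j i * sF a i := by
  obtain ⟨j, hj0, hjred, hjsum⟩ := exists_rep a ha k hk x hx1 hx2
  refine ⟨j, ⟨hj0, hjred, hjsum⟩, ?_⟩
  rintro j' ⟨hj'0, hj'red, hj'sum⟩
  funext i
  by_cases hi : i = 0 ∨ k < i
  · rw [hj'0 i hi, hj0 i hi]
  · push_neg at hi
    exact agree a ha k j' j hj'red.1 hj'red.2.2 hjred.1 hjred.2.2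
      (by rw [← hj'sum, ← hjsum]) i (by omega) (by omega)
end

section
/- The genus of G_{a,b}(c) (the cardinality of ℕ \ G_{a,b}(c)) equals (1/c)·Σ_{l=1}^{c-1} x_l − (c−1)/2, where x_l = min{ x ∈ G_{a,b}(c) : x ≡ b·l (mod c) }. -/
/-
If `S ⊆ ℕ` is closed under adding `c`, then in each residue class mod `c` the elements of `S`
are exactly the numbers `≥` the least one `w`, so that class contributes `w / c` gaps. Since
`w ≡ r (mod c)`, summing `c * (w / c) = w - r` over the classes gives
`c · #(ℕ \ S) = Σ_r w_r - Σ_{r < c} r` (Selmer's formula). For `G_{a,b}(c)` the classes are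
indexed by `l ↦ b * l mod c`, a permutation of `[0, c)` because `gcd(b, c) = 1`, and `x_0 = 0`.
-/

lemma zero_mem_Gset (a b c : ℕ) : 0 ∈ Gset a b c :=
  Set.mem_sInter.2 fun _ hS => hS.1.1

lemma add_mem_Gset {a b c n : ℕ} (hn : n ∈ Gset a b c) : n + c ∈ Gset a b c :=
  Set.mem_sInter.2 fun S hS => hS.1.2.1 n (Set.mem_sInter.1 hn S hS) c hS.2

lemma Nat.bijOn_mul_mod_of_coprime {b c : ℕ} (hcop : b.Coprime c) :
    Set.BijOn (fun l => b * l % c) (Set.Iio c) (Set.Iio c) := by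
  rcases c.eq_zero_or_pos with rfl | hc
  · simp
  have hmaps : Set.MapsTo (fun l => b * l % c) (Set.Iio c) (Set.Iio c) :=
    fun l _ => Nat.mod_lt _ hc
  refine ((Set.finite_Iio c).injOn_iff_bijOn_of_mapsTo hmaps).1 fun l₁ h₁ l₂ h₂ h => ?_
  have := Nat.ModEq.cancel_left_of_coprime hcop.symm h
  rwa [Nat.ModEq, Nat.mod_eq_of_lt h₁, Nat.mod_eq_of_lt h₂] at this

section Selmer

variable {S : Set ℕ} {c : ℕ}

lemma add_mul_mem (hS : ∀ n ∈ S, n + c ∈ S) {n : ℕ} (hn : n ∈ S) (k : ℕ) :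
    n + c * k ∈ S := by
  induction k with
  | zero => simpa using hn
  | succ k ih => simpa [mul_add, ← add_assoc] using hS _ ih

lemma mem_iff_le_of_isLeast (hS : ∀ n ∈ S, n + c ∈ S) {r w n : ℕ}
    (hw : IsLeast {y | y ∈ S ∧ y % c = r} w) (hn : n % c = r) : n ∈ S ↔ w ≤ n := by
  refine ⟨fun h => hw.2 ⟨h, hn⟩, fun h => ?_⟩
  obtain ⟨k, hk⟩ := (Nat.modEq_iff_dvd' h).1 (hw.1.2.trans hn.symm)
  rw [show n = w + c * k by lia]
  exact add_mul_mem hS hw.1.1 k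

theorem ncard_compl_eq_sum_div (hc : 0 < c) (hS : ∀ n ∈ S, n + c ∈ S) {ρ x : ℕ → ℕ}
    (hρ : Set.BijOn ρ (Set.Iio c) (Set.Iio c))
    (hx : ∀ l < c, IsLeast {y | y ∈ S ∧ y % c = ρ l} (x l)) :
    {n | n ∉ S}.ncard = ∑ l ∈ Finset.range c, x l / c := by
  have hgaps : {n | n ∉ S} = ↑((Finset.range c).biUnion fun l =>
      (Finset.range (x l)).filter (· ≡ x l [MOD c])) := by
    ext n
    obtain ⟨l, hl, hln⟩ := hρ.surjOn (Nat.mod_lt n hc)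
    simp only [Set.mem_ofPred_eq, Finset.coe_biUnion, Finset.mem_coe, Finset.mem_filter,
      Finset.mem_range, Set.mem_iUnion, exists_prop]
    constructor
    · intro hn
      exact ⟨l, hl, not_le.1 fun h => hn ((mem_iff_le_of_isLeast hS (hx l hl) hln.symm).2 h),
        show n % c = x l % c by rw [(hx l hl).1.2, hln]⟩
    · rintro ⟨l', hl', hlt, hmod⟩ hn
      have hres : n % c = ρ l' := Eq.trans hmod (hx l' hl').1.2
      exact (not_le.2 hlt) ((mem_iff_le_of_isLeast hS (hx l' hl') hres).1 hn)
  rw [hgaps, Set.ncard_coe_finset, Finset.card_biUnion]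
  · refine Finset.sum_congr rfl fun l _ => ?_
    rw [← Nat.count_eq_card_filter_range, Nat.count_modEq_card _ hc]
    simp
  · intro l₁ hl₁ l₂ hl₂ hne
    refine Finset.disjoint_left.2 fun n hn₁ hn₂ => hne (hρ.injOn (Finset.mem_range.1 hl₁)
      (Finset.mem_range.1 hl₂) ?_)
    rw [Finset.mem_filter] at hn₁ hn₂
    rw [← (hx l₁ (Finset.mem_range.1 hl₁)).1.2, ← (hx l₂ (Finset.mem_range.1 hl₂)).1.2,
      ← hn₁.2, hn₂.2]

theorem mul_ncard_compl_add_sum_range (hc : 0 < c) (hS : ∀ n ∈ S, n + c ∈ S)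
    {ρ x : ℕ → ℕ} (hρ : Set.BijOn ρ (Set.Iio c) (Set.Iio c))
    (hx : ∀ l < c, IsLeast {y | y ∈ S ∧ y % c = ρ l} (x l)) :
    c * {n | n ∉ S}.ncard + ∑ r ∈ Finset.range c, r = ∑ l ∈ Finset.range c, x l := by
  have hres : ∑ l ∈ Finset.range c, ρ l = ∑ r ∈ Finset.range c, r :=
    Finset.sum_nbij ρ (fun _ hl => by simpa using hρ.mapsTo (by simpa using hl))
      (by simpa using hρ.injOn) (by simpa using hρ.surjOn) fun _ _ => rfl
  rw [ncard_compl_eq_sum_div hc hS hρ hx, Finset.mul_sum, ← hres, ← Finset.sum_add_distrib]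
  refine Finset.sum_congr rfl fun l hl => ?_
  rw [← (hx l (Finset.mem_range.1 hl)).1.2, Nat.div_add_mod]

end Selmer

theorem stmt18_general (a b c : ℕ) (hc : 2 ≤ c)
    (hcop : Nat.gcd b c = 1) (x : ℕ → ℕ)
    (hx : ∀ l < c, IsLeast {y : ℕ | y ∈ Gset a b c ∧ y % c = (b * l) % c} (x l)) :
    2 * c * {n : ℕ | n ∉ Gset a b c}.ncard + c * (c - 1) =
      2 * ∑ l ∈ Finset.Icc 1 (c - 1), x l := by
  have hx0 : x 0 = 0 := Nat.le_zero.1 ((hx 0 (by lia)).2 ⟨zero_mem_Gset a b c, by simp⟩)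
  have hselmer := mul_ncard_compl_add_sum_range (by lia) (fun _ => add_mem_Gset)
    (Nat.bijOn_mul_mod_of_coprime hcop) hx
  have hsplit : ∑ l ∈ Finset.range c, x l = x 0 + ∑ l ∈ Finset.Icc 1 (c - 1), x l := by
    obtain ⟨d, rfl⟩ : ∃ d, c = d + 1 := ⟨c - 1, by lia⟩
    rw [Finset.sum_range_eq_add_Ico _ (by lia), Nat.add_sub_cancel,
      Finset.Ico_add_one_right_eq_Icc]
  have htri := Finset.sum_range_id_mul_two c
  lia

theorem stmt18 (a b c : ℕ) (ha : 0 < a) (hb : 0 < b) (hc : 2 ≤ c)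
    (hcop : Nat.gcd b c = 1) (x : ℕ → ℕ)
    (hx : ∀ l < c, IsLeast {y : ℕ | y ∈ Gset a b c ∧ y % c = (b * l) % c} (x l)) :
    2 * c * {n : ℕ | n ∉ Gset a b c}.ncard + c * (c - 1) =
      2 * ∑ l ∈ Finset.Icc 1 (c - 1), x l :=
  stmt18_general a b c hc hcop x hx
end
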